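/- arXiv:2302.04581 — 2 statements merged into one kernel-verified Lean document; each statement's English description precedes it below -/
import Mathlib

section
/- Let an IDO instance with n agents and thresholds (h_1, ..., h_n) be given, and suppose some run of HFFD successfully produces a sequence of bundles A = (A_1, ..., A_n), with ℓ the last agent (the agent receiving A_n). If h_ℓ ≥ MMS(M, v_ℓ, n), then the tuple (M, A, v_ℓ, h_ℓ) is First Fit Valid. -/
open scoped Classical

noncomputable section

variable {C : Type*} [LinearOrder C]

/-- Total cost of a bundle of chores: the sum of the chore costs. -/
def bundleCost (v : C → ℝ) (B : Finset C) : ℝ := ∑ c ∈ B, v c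

/-- The universal ordering is the ambient linear order on `C`, along which costs are
non-increasing; hence the `p`-th largest chore `B[p]` of a bundle `B` (ties broken by the
universal ordering) is the `p`-th element of `B` sorted along the order.
`nthCost v B p` is `v (B[p])` (1-indexed), with the convention `0` for `p > |B|`. -/
def nthCost (v : C → ℝ) (B : Finset C) (p : ℕ) : ℝ :=
  ((B.sort (· ≤ ·)).map v).getD (p - 1) 0

/-- `B1 =lex B2` : equal cost at each position. -/
def lexEq (v : C → ℝ) (B1 B2 : Finset C) : Prop :=
  ∀ p : ℕ, nthCost v B1 p = nthCost v B2 p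

/-- `B1 ≤lex B2`. -/
def lexLe (v : C → ℝ) (B1 B2 : Finset C) : Prop :=
  lexEq v B1 B2 ∨
    ∃ q : ℕ, nthCost v B1 q < nthCost v B2 q ∧ ∀ p < q, nthCost v B1 p = nthCost v B2 p

/-- `B1 <lex B2`. -/
def lexLt (v : C → ℝ) (B1 B2 : Finset C) : Prop :=
  lexLe v B1 B2 ∧ ¬ lexEq v B1 B2

/-- `(M, v)` is a chore instance for the universal ordering given by the linear order on `C`:
all costs are nonnegative and non-increasing along the ordering. -/
def ChoreOrdered (M : Finset C) (v : C → ℝ) : Prop :=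
  (∀ c ∈ M, 0 ≤ v c) ∧ ∀ c ∈ M, ∀ c' ∈ M, c ≤ c' → v c' ≤ v c

/-- `P` is a partition of `M` into `n` (possibly empty) bundles. -/
def IsPartition (M : Finset C) {n : ℕ} (P : Fin n → Finset C) : Prop :=
  (∀ i, P i ⊆ M) ∧ (∀ i j, i ≠ j → Disjoint (P i) (P j)) ∧ ∀ c ∈ M, ∃ i, c ∈ P i

/-- The maximin share: the minimum over partitions of `M` into `n` bundles of the
maximum bundle cost. -/
def MMS (M : Finset C) (v : C → ℝ) (n : ℕ) : ℝ :=
  sInf {x : ℝ | ∃ P : Fin n → Finset C, IsPartition M P ∧ ∀ i, bundleCost v (P i) ≤ x}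

/-- One pass of first-fit: scan the chores in the given list order, adding a chore whenever
the bundle cost stays at most `τ`. -/
def ffdFill (v : C → ℝ) (τ : ℝ) : List C → Finset C → Finset C
  | [], B => B
  | c :: rest, B =>
      if bundleCost v (insert c B) ≤ τ then ffdFill v τ rest (insert c B)
      else ffdFill v τ rest B

/-- The bundle FFD builds from the remaining chores `R` (scanned from largest to smallest,
i.e. along the linear order on `C`). -/
def ffdBundle (v : C → ℝ) (τ : ℝ) (R : Finset C) : Finset C :=
  ffdFill v τ (R.sort (· ≤ ·)) ∅

/-- The chores remaining after FFD has filled `k` bundles. -/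
def ffdRem (M : Finset C) (v : C → ℝ) (τ : ℝ) : ℕ → Finset C
  | 0 => M
  | k + 1 => ffdRem M v τ k \ ffdBundle v τ (ffdRem M v τ k)

/-- The `(k+1)`-st bundle (0-indexed `k`) output by FFD. -/
def FFDBundle (M : Finset C) (v : C → ℝ) (τ : ℝ) (k : ℕ) : Finset C :=
  ffdBundle v τ (ffdRem M v τ k)

/-- `FFD(M, v, τ, n)` allocates all chores. -/
def FFDAllocatesAll (M : Finset C) (v : C → ℝ) (τ : ℝ) (n : ℕ) : Prop :=
  ffdRem M v τ n = ∅

/-- The union `A_1 ∪ ⋯ ∪ A_{k-1}` of the bundles preceding the `k`-th one (0-indexed). -/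
def priorUnion {n : ℕ} (A : Fin n → Finset C) (k : Fin n) : Finset C :=
  (Finset.univ.filter fun j : Fin n => j < k).biUnion A

/-- `B` is a `k`-th benchmark bundle of the collection `A`: a lexicographically maximal
subset of `M \ (A_1 ∪ ⋯ ∪ A_{k-1})` among subsets of cost at most `τ`. -/
def IsBenchmark (M : Finset C) (v : C → ℝ) (τ : ℝ) {n : ℕ}
    (A : Fin n → Finset C) (k : Fin n) (B : Finset C) : Prop :=
  B ⊆ M \ priorUnion A k ∧ bundleCost v B ≤ τ ∧
    ∀ B' ⊆ M \ priorUnion A k, bundleCost v B' ≤ τ → lexLe v B' B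

/-- The tuple `(M, A, v, τ)` is First Fit Valid: `A` consists of pairwise disjoint bundles
in `M`, `τ ≥ MMS(M, v, n)`, and each `A_k` is lexicographically at least the `k`-th
benchmark bundle. -/
def FirstFitValid (M : Finset C) {n : ℕ} (A : Fin n → Finset C) (v : C → ℝ) (τ : ℝ) : Prop :=
  (∀ k, A k ⊆ M) ∧ (∀ i j, i ≠ j → Disjoint (A i) (A j)) ∧ MMS M v n ≤ τ ∧
    ∀ (k : Fin n) (B : Finset C), IsBenchmark M v τ A k B → lexLe v B (A k)

/-- `c` is the last chore `B[|B|]` of the bundle `B`. -/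
def IsLastChore (B : Finset C) (c : C) : Prop := c ∈ B ∧ ∀ c' ∈ B, c' ≤ c

/-- The fit-in space `fs` of a bundle: `τ` minus the cost of the bundle without its
last chore. -/
def fitSpace (v : C → ℝ) (τ : ℝ) (B : Finset C) : ℝ :=
  if h : B.Nonempty then τ - bundleCost v (B.erase (B.max' h)) else τ

/-- The chore `c = B[p]` of `B` is `x`-redundant: the cost of `{B[1], …, B[p-1]}`
is at least `x`. -/
def Redundant (v : C → ℝ) (x : ℝ) (B : Finset C) (c : C) : Prop :=
  c ∈ B ∧ x ≤ bundleCost v (B.filter fun c' => c' < c)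

/-- `A` dominates `B`: there is `f : B → A` with `v(f⁻¹(c')) ≤ v(c')` for every `c' ∈ A`. -/
def Dominates (v : C → ℝ) (A B : Finset C) : Prop :=
  ∃ f : C → C, (∀ c ∈ B, f c ∈ A) ∧
    ∀ c' ∈ A, bundleCost v (B.filter fun c => f c = c') ≤ v c'

/-- `cnew` is a suitable reduced chore for `cstar` (the excessive chore of `A_k`):
`v(cnew) < v(cstar)` and, running FFD on `M' = (M \ {cstar}) ∪ {cnew}`, the union of the
first `k` output bundles equals `((A_1 ∪ ⋯ ∪ A_k) \ {cstar}) ∪ {cnew}`. -/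
def SuitableReduced (M : Finset C) (v : C → ℝ) (τ : ℝ) {n : ℕ}
    (A : Fin n → Finset C) (k : Fin n) (cstar cnew : C) : Prop :=
  v cnew < v cstar ∧
    (Finset.univ.filter fun j : Fin n => j ≤ k).biUnion
        (fun j => FFDBundle (insert cnew (M.erase cstar)) v τ j.val) =
      insert cnew (((Finset.univ.filter fun j : Fin n => j ≤ k).biUnion A).erase cstar)

/-- The Tidy-Up conditions on the tuple `(M, A, v, τ)`. -/
def TidyUp (M : Finset C) {n : ℕ} (A : Fin n → Finset C) (v : C → ℝ) (τ : ℝ) : Prop :=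
  FirstFitValid M A v τ ∧
  (∃ cstar, M \ Finset.univ.biUnion A = {cstar} ∧ ∀ c ∈ M, v cstar ≤ v c) ∧
  (∀ k, ∀ c ∈ A k, ¬ Redundant v (MMS M v n) (A k) c) ∧
  (∀ c ∈ M, τ - MMS M v n < v c) ∧
  (∀ k, 2 ≤ (A k).card ∧ nthCost v (A k) 1 + nthCost v (A k) 2 < MMS M v n) ∧
  (∃ P : Fin n → Finset C, IsPartition M P ∧
    (∀ j, bundleCost v (P j) ≤ MMS M v n ∧ 3 ≤ (P j).card) ∧
    ∀ k j, ¬ Dominates v (A k) (P j))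

/-- One pass of HFFD's first-fit with remaining agents `T`: a chore is added iff some
remaining agent accepts the enlarged bundle. -/
def hffdFill {n : ℕ} (v : Fin n → C → ℝ) (h : Fin n → ℝ) (T : Finset (Fin n)) :
    List C → Finset C → Finset C
  | [], B => B
  | c :: rest, B =>
      if ∃ i ∈ T, bundleCost (v i) (insert c B) ≤ h i then
        hffdFill v h T rest (insert c B)
      else hffdFill v h T rest B

/-- `(A, assign)` is a run of HFFD on the instance `(M, v)` with thresholds `h`:
bundle `A_k` is built by first-fit over the remaining chores using the remaining agents,
and is assigned to the remaining agent `assign k`, who accepts it. -/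
def IsHFFDRun {n : ℕ} (M : Finset C) (v : Fin n → C → ℝ) (h : Fin n → ℝ)
    (A : Fin n → Finset C) (assign : Fin n → Fin n) : Prop :=
  Function.Injective assign ∧
    ∀ k : Fin n,
      A k = hffdFill v h
          (Finset.univ \ (Finset.univ.filter fun j : Fin n => j < k).image assign)
          ((M \ priorUnion A k).sort (· ≤ ·)) ∅ ∧
      bundleCost (v (assign k)) (A k) ≤ h (assign k)


/-!
The last agent `ℓ` remains available in every round, so HFFD's first fit never rejects a chore
that keeps the bundle within `h ℓ`. A greedy bundle with this property, built by scanning the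
remaining chores in the universal order, is lexicographically maximal for `v ℓ` among bundles of
cost at most `h ℓ`, by an exchange argument along the scan.
-/

open Finset

section Lex

variable {v : C → ℝ}

lemma sort_union_of_forall_lt {P X : Finset C} (hPX : ∀ x ∈ P, ∀ y ∈ X, x < y) :
    (P ∪ X).sort (· ≤ ·) = P.sort (· ≤ ·) ++ X.sort (· ≤ ·) := by
  induction P using Finset.induction_on_min with
  | empty => simp
  | insert a P haP ih =>
    have haX : ∀ y ∈ X, a < y := hPX a (mem_insert_self a P)
    have ha : a ∉ P ∪ X := fun h => (mem_union.1 h).elim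
      (fun h => lt_irrefl a (haP a h)) (fun h => lt_irrefl a (haX a h))
    rw [insert_union, sort_insert _ (fun y hy => ?_) ha, sort_insert _ (fun y hy => (haP y hy).le)
      (fun h => lt_irrefl a (haP a h)), ih (fun x hx => hPX x (mem_insert_of_mem hx)),
      List.cons_append]
    exact (mem_union.1 hy).elim (fun h => (haP y h).le) (fun h => (haX y h).le)

lemma sort_insert_of_forall_lt {c : C} {X : Finset C} (hcX : ∀ y ∈ X, c < y) :
    (insert c X).sort (· ≤ ·) = c :: X.sort (· ≤ ·) :=
  sort_insert _ (fun y hy => (hcX y hy).le) (fun h => lt_irrefl c (hcX c h))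

lemma nthCost_union_of_lt_card {P X : Finset C} (hPX : ∀ x ∈ P, ∀ y ∈ X, x < y) {p : ℕ}
    (hp : p - 1 < P.card) : nthCost v (P ∪ X) p = nthCost v P p := by
  unfold nthCost
  rw [sort_union_of_forall_lt hPX, List.map_append, List.getD_append]
  simpa using hp

lemma nthCost_union_of_card_le {P X : Finset C} (hPX : ∀ x ∈ P, ∀ y ∈ X, x < y) {p : ℕ}
    (hp : P.card ≤ p - 1) : nthCost v (P ∪ X) p = nthCost v X (p - P.card) := by
  unfold nthCost
  rw [sort_union_of_forall_lt hPX, List.map_append, List.getD_append_right _ _ _ _ (by simpa)]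
  congr 1
  simp only [List.length_map, length_sort]
  omega

lemma nthCost_insert_one {c : C} {X : Finset C} (hcX : ∀ y ∈ X, c < y) :
    nthCost v (insert c X) 1 = v c := by
  simp [nthCost, sort_insert_of_forall_lt hcX]

lemma nthCost_empty (p : ℕ) : nthCost v ∅ p = 0 := by
  simp [nthCost]

lemma nthCost_nonneg {X : Finset C} (hX : ∀ x ∈ X, 0 ≤ v x) (p : ℕ) : 0 ≤ nthCost v X p := by
  unfold nthCost
  rcases lt_or_ge (p - 1) ((X.sort (· ≤ ·)).map v).length with hp | hp
  · rw [List.getD_eq_getElem _ _ hp]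
    obtain ⟨x, hx, hvx⟩ := List.mem_map.1 (List.getElem_mem hp)
    exact hvx ▸ hX x ((mem_sort _).1 hx)
  · exact (List.getD_eq_default _ _ hp).ge

lemma lexEq_insert_insert {b c : C} {X : Finset C} (hbX : ∀ y ∈ X, b < y)
    (hcX : ∀ y ∈ X, c < y) (hbc : v b = v c) : lexEq v (insert b X) (insert c X) := by
  intro p
  simp only [nthCost, sort_insert_of_forall_lt hbX, sort_insert_of_forall_lt hcX,
    List.map_cons, hbc]

lemma lexLe_refl (X : Finset C) : lexLe v X X := Or.inl fun _ => rfl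

lemma lexLe_trans {X Y Z : Finset C} (hXY : lexLe v X Y) (hYZ : lexLe v Y Z) : lexLe v X Z := by
  rcases hXY with hXY | ⟨q, hlt, heq⟩ <;> rcases hYZ with hYZ | ⟨q', hlt', heq'⟩
  · exact Or.inl fun p => (hXY p).trans (hYZ p)
  · exact Or.inr ⟨q', hXY q' ▸ hlt', fun p hp => (hXY p).trans (heq' p hp)⟩
  · exact Or.inr ⟨q, hYZ q ▸ hlt, fun p hp => (heq p hp).trans (hYZ p)⟩
  · rcases lt_trichotomy q q' with h | rfl | h
    · exact Or.inr ⟨q, heq' q h ▸ hlt, fun p hp => (heq p hp).trans (heq' p (hp.trans h))⟩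
    · exact Or.inr ⟨q, hlt.trans hlt', fun p hp => (heq p hp).trans (heq' p hp)⟩
    · exact Or.inr ⟨q', (heq q' h).symm ▸ hlt',
        fun p hp => (heq p (hp.trans h)).trans (heq' p hp)⟩

/-- Truncated subtraction makes position `0` an alias of position `1`, so a witness of a strict
comparison can always be taken at a position `d ≥ 1`. -/
lemma lexLe_iff_pos_witness {X Y : Finset C} :
    lexLe v X Y ↔ lexEq v X Y ∨ ∃ d, 1 ≤ d ∧ nthCost v X d < nthCost v Y d ∧
      ∀ p, 1 ≤ p → p < d → nthCost v X p = nthCost v Y p := by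
  refine or_congr_right ⟨?_, ?_⟩
  · rintro ⟨q, hlt, heq⟩
    rcases Nat.eq_zero_or_pos q with rfl | hq
    · exact ⟨1, le_rfl, hlt, fun p hp hp' => by omega⟩
    · exact ⟨q, hq, hlt, fun p _ hp => heq p hp⟩
  · rintro ⟨d, hd, hlt, heq⟩
    rcases hd.eq_or_lt with rfl | hd
    · exact ⟨0, hlt, fun p hp => by omega⟩
    · refine ⟨d, hlt, fun p hp => ?_⟩
      rcases Nat.eq_zero_or_pos p with rfl | hp0
      · exact heq 1 le_rfl hd
      · exact heq p hp0 hp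

lemma lexLe_of_nthCost_one_lt {X Y : Finset C} (h : nthCost v X 1 < nthCost v Y 1) :
    lexLe v X Y :=
  Or.inr ⟨0, h, fun p hp => absurd hp p.not_lt_zero⟩

lemma empty_lexLe {X : Finset C} (hX : ∀ x ∈ X, 0 ≤ v x) : lexLe v ∅ X := by
  by_cases hzero : ∀ p, nthCost v X p = 0
  · exact Or.inl fun p => by rw [nthCost_empty, hzero]
  push Not at hzero
  refine Or.inr ⟨Nat.find hzero, ?_, fun p hp => ?_⟩
  · rw [nthCost_empty]
    exact (nthCost_nonneg hX _).lt_of_ne' (Nat.find_spec hzero)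
  · rw [nthCost_empty, not_not.1 (Nat.find_min hzero hp)]

lemma lexLe_union_left {P X Y : Finset C} (hPX : ∀ x ∈ P, ∀ y ∈ X, x < y)
    (hPY : ∀ x ∈ P, ∀ y ∈ Y, x < y) (hXY : lexLe v X Y) : lexLe v (P ∪ X) (P ∪ Y) := by
  have hsplit : ∀ p, (p - 1 < P.card → nthCost v (P ∪ X) p = nthCost v (P ∪ Y) p) ∧
      (P.card ≤ p - 1 → nthCost v (P ∪ X) p = nthCost v X (p - P.card) ∧
        nthCost v (P ∪ Y) p = nthCost v Y (p - P.card)) := fun p =>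
    ⟨fun hp => by rw [nthCost_union_of_lt_card hPX hp, nthCost_union_of_lt_card hPY hp],
      fun hp => ⟨nthCost_union_of_card_le hPX hp, nthCost_union_of_card_le hPY hp⟩⟩
  rcases lexLe_iff_pos_witness.1 hXY with hXY | ⟨d, hd, hlt, heq⟩
  · refine Or.inl fun p => ?_
    rcases lt_or_ge (p - 1) P.card with hp | hp
    · exact (hsplit p).1 hp
    · rw [((hsplit p).2 hp).1, ((hsplit p).2 hp).2, hXY]
  refine lexLe_iff_pos_witness.2 (Or.inr ⟨d + P.card, by omega, ?_, fun p hp hpd => ?_⟩)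
  · obtain ⟨hX, hY⟩ := (hsplit (d + P.card)).2 (by omega)
    rwa [hX, hY, Nat.add_sub_cancel]
  · rcases lt_or_ge (p - 1) P.card with hpP | hpP
    · exact (hsplit p).1 hpP
    · rw [((hsplit p).2 hpP).1, ((hsplit p).2 hpP).2, heq _ (by omega) (by omega)]

lemma bundleCost_insert {a : C} {B : Finset C} (ha : a ∉ B) :
    bundleCost v (insert a B) = v a + bundleCost v B :=
  sum_insert ha

lemma bundleCost_insert_le_union {c : C} {B0 B : Finset C} (hcB : c ∈ B)
    (hB : ∀ x ∈ B, 0 ≤ v x) : bundleCost v (insert c B0) ≤ bundleCost v (B0 ∪ B) := by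
  refine sum_le_sum_of_subset_of_nonneg (insert_subset (mem_union_right _ hcB) subset_union_left)
    fun x hx hxc => hB x ?_
  exact (mem_union.1 hx).resolve_left fun hx0 => hxc (mem_insert_of_mem hx0)

lemma notMem_of_forall_lt {a : C} {P X : Finset C} (hPa : ∀ x ∈ P, x < a)
    (haX : ∀ y ∈ X, a < y) : a ∉ P ∪ X := fun h =>
  (mem_union.1 h).elim (fun h => lt_irrefl a (hPa a h)) (fun h => lt_irrefl a (haX a h))

/-- The smallest chore `b` of a competitor avoiding `c` costs at most `v c`: if strictly less,
`P ∪ insert c X` wins at that position; on a tie, swapping `b` for `c` yields a competitor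
containing `c` with the same cost sequence. -/
lemma lexLe_of_forall_lexLe_insert {S : Finset C} (hS : ChoreOrdered S v) {τ : ℝ}
    {P X B : Finset C} {c : C} (hcS : c ∈ S) (hXS : X ⊆ S) (hBS : B ⊆ S)
    (hPc : ∀ x ∈ P, x < c) (hcX : ∀ y ∈ X, c < y) (hcB : ∀ y ∈ B, c < y)
    (hcost : bundleCost v (P ∪ B) ≤ τ)
    (hins : ∀ R ⊆ B, bundleCost v (insert c P ∪ R) ≤ τ →
      lexLe v (insert c P ∪ R) (insert c P ∪ X)) :
    lexLe v (P ∪ B) (insert c P ∪ X) := by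
  have hPcX : ∀ x ∈ P, ∀ y ∈ insert c X, x < y := by
    simp only [mem_insert, forall_eq_or_imp]
    exact fun x hx => ⟨hPc x hx, fun y hy => (hPc x hx).trans (hcX y hy)⟩
  have hPB : ∀ x ∈ P, ∀ y ∈ B, x < y := fun x hx y hy => (hPc x hx).trans (hcB y hy)
  rw [insert_union, ← union_insert]
  induction B using Finset.induction_on_min with
  | empty =>
    refine lexLe_union_left (by simp) hPcX (empty_lexLe fun x hx => hS.1 x ?_)
    exact (mem_insert.1 hx).elim (· ▸ hcS) (hXS ·)
  | insert b R hbR _ =>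
    have hcb : c < b := hcB b (mem_insert_self b R)
    rcases (hS.2 c hcS b (hBS (mem_insert_self b R)) hcb.le).lt_or_eq with hlt | heq
    · refine lexLe_union_left hPB hPcX (lexLe_of_nthCost_one_lt ?_)
      rwa [nthCost_insert_one hbR, nthCost_insert_one hcX]
    have hcR : ∀ y ∈ R, c < y := fun y hy => hcb.trans (hbR y hy)
    have hPcR : ∀ x ∈ P, ∀ y ∈ insert c R, x < y := by
      simp only [mem_insert, forall_eq_or_imp]
      exact fun x hx => ⟨hPc x hx, fun y hy => hPB x hx y (mem_insert_of_mem hy)⟩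
    have hswap : lexLe v (P ∪ insert b R) (P ∪ insert c R) :=
      lexLe_union_left hPB hPcR (Or.inl (lexEq_insert_insert hbR hcR heq))
    have hcost' : bundleCost v (insert c P ∪ R) ≤ τ := by
      rwa [union_insert, bundleCost_insert (notMem_of_forall_lt (hPB · · b (mem_insert_self b R))
        hbR), heq, ← bundleCost_insert (notMem_of_forall_lt hPc hcR), ← insert_union] at hcost
    have hwin := hins R (subset_insert b R) hcost'
    rw [insert_union, ← union_insert, insert_union, ← union_insert] at hwin
    exact lexLe_trans hswap hwin

end Lex

section HFFD

variable {n : ℕ} (v : Fin n → C → ℝ) (h : Fin n → ℝ) (T : Finset (Fin n))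

lemma exists_hffdFill_eq_union (L : List C) (B0 : Finset C) :
    ∃ X : Finset C, (∀ x ∈ X, x ∈ L) ∧ hffdFill v h T L B0 = B0 ∪ X := by
  induction L generalizing B0 with
  | nil => exact ⟨∅, by simp, by simp [hffdFill]⟩
  | cons c rest ih =>
    rw [hffdFill]
    split_ifs
    · obtain ⟨X, hX, hfill⟩ := ih (insert c B0)
      refine ⟨insert c X, ?_, by rw [hfill, insert_union, union_insert]⟩
      simp only [mem_insert, forall_eq_or_imp, List.mem_cons, true_or, true_and]
      exact fun x hx => Or.inr (hX x hx)
    · obtain ⟨X, hX, hfill⟩ := ih B0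
      exact ⟨X, fun x hx => List.mem_cons_of_mem c (hX x hx), hfill⟩

theorem lexLe_hffdFill {ℓ : Fin n} (hℓ : ℓ ∈ T) {S : Finset C} (hS : ChoreOrdered S (v ℓ))
    {L : List C} (hL : L.Pairwise (· < ·)) (hLS : ∀ x ∈ L, x ∈ S) {B0 B : Finset C}
    (hB0 : ∀ x ∈ B0, ∀ y ∈ L, x < y) (hB : ∀ x ∈ B, x ∈ L)
    (hcost : bundleCost (v ℓ) (B0 ∪ B) ≤ h ℓ) :
    lexLe (v ℓ) (B0 ∪ B) (hffdFill v h T L B0) := by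
  induction L generalizing B0 B with
  | nil =>
    obtain rfl : B = ∅ := eq_empty_of_forall_notMem fun x hx => by simpa using hB x hx
    rw [union_empty, hffdFill]
    exact lexLe_refl B0
  | cons c rest ih =>
    obtain ⟨hc_rest, hrest⟩ := List.pairwise_cons.1 hL
    have hrestS : ∀ x ∈ rest, x ∈ S := fun x hx => hLS x (List.mem_cons_of_mem c hx)
    have hB0c : ∀ x ∈ B0, x < c := fun x hx => hB0 x hx c List.mem_cons_self
    have hB0rest : ∀ x ∈ B0, ∀ y ∈ rest, x < y :=
      fun x hx y hy => hB0 x hx y (List.mem_cons_of_mem c hy)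
    have hcB0rest : ∀ x ∈ insert c B0, ∀ y ∈ rest, x < y := by
      simp only [mem_insert, forall_eq_or_imp]
      exact ⟨hc_rest, hB0rest⟩
    have hBrest_of_notMem (hcB : c ∉ B) : ∀ x ∈ B, x ∈ rest := fun x hx =>
      (List.mem_cons.1 (hB x hx)).resolve_left fun hxc => hcB (hxc ▸ hx)
    rw [hffdFill]
    split_ifs with hacc
    · by_cases hcB : c ∈ B
      · have hsplit : B0 ∪ B = insert c B0 ∪ B.erase c := by
          rw [insert_union, ← union_insert, insert_erase hcB]
        rw [hsplit] at hcost ⊢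
        refine ih hrest hrestS hcB0rest (fun x hx => ?_) hcost
        exact (List.mem_cons.1 (hB x (mem_of_mem_erase hx))).resolve_left (ne_of_mem_erase hx)
      have hBrest := hBrest_of_notMem hcB
      obtain ⟨X, hXrest, hfill⟩ := exists_hffdFill_eq_union v h T rest (insert c B0)
      rw [hfill]
      refine lexLe_of_forall_lexLe_insert hS (hLS c List.mem_cons_self)
        (fun x hx => hrestS x (hXrest x hx)) (fun x hx => hrestS x (hBrest x hx)) hB0c
        (fun y hy => hc_rest y (hXrest y hy)) (fun y hy => hc_rest y (hBrest y hy)) hcost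
        fun R hRB hcostR => ?_
      rw [← hfill]
      exact ih hrest hrestS hcB0rest (fun x hx => hBrest x (hRB hx)) hcostR
    · have hcB : c ∉ B := fun hcB => hacc ⟨ℓ, hℓ,
        (bundleCost_insert_le_union hcB fun x hx => hS.1 x (hLS x (hB x hx))).trans hcost⟩
      exact ih hrest hrestS hB0rest (hBrest_of_notMem hcB) hcost

lemma hffdFill_sort_subset (R : Finset C) : hffdFill v h T (R.sort (· ≤ ·)) ∅ ⊆ R := by
  obtain ⟨X, hX, hfill⟩ := exists_hffdFill_eq_union v h T (R.sort (· ≤ ·)) ∅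
  rw [hfill, empty_union]
  exact fun x hx => (mem_sort _).1 (hX x hx)

theorem lexLe_hffdFill_sort {ℓ : Fin n} (hℓ : ℓ ∈ T) {S R B : Finset C}
    (hS : ChoreOrdered S (v ℓ)) (hRS : R ⊆ S) (hBR : B ⊆ R) (hB : bundleCost (v ℓ) B ≤ h ℓ) :
    lexLe (v ℓ) B (hffdFill v h T (R.sort (· ≤ ·)) ∅) := by
  simpa using lexLe_hffdFill v h T hℓ hS (sortedLT_sort R).pairwise
    (fun x hx => hRS ((mem_sort _).1 hx)) (B0 := ∅) (by simp)
    (fun x hx => (mem_sort _).2 (hBR hx)) (by simpa using hB)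

end HFFD

lemma disjoint_of_disjoint_priorUnion {n : ℕ} {A : Fin n → Finset C}
    (hA : ∀ k, Disjoint (A k) (priorUnion A k)) {i j : Fin n} (hij : i ≠ j) :
    Disjoint (A i) (A j) := by
  have hlt {i j : Fin n} (hij : i < j) : Disjoint (A i) (A j) :=
    ((hA j).mono_right (subset_biUnion_of_mem A (by simpa using hij))).symm
  rcases hij.lt_or_gt with hij | hij
  exacts [hlt hij, (hlt hij).symm]

lemma apply_notMem_image_of_forall_le {n : ℕ} {α : Type*} [DecidableEq α] {f : Fin n → α}
    (hf : Function.Injective f) {m : Fin n} (hm : ∀ k, k ≤ m) (k : Fin n) :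
    f m ∉ (univ.filter fun j : Fin n => j < k).image f := by
  simp only [mem_image, mem_filter, mem_univ, true_and, hf.eq_iff]
  rintro ⟨j, hjk, rfl⟩
  exact (hm k).not_gt hjk

/-- any bundle collection produced by a successful run of HFFD, viewed with the
cost function and threshold of the last agent, is First Fit Valid (provided the last agent's
threshold is at least her MMS). -/
theorem hffd_run_first_fit_valid {n : ℕ} (hn : 1 ≤ n)
    (M : Finset C) (v : Fin n → C → ℝ) (h : Fin n → ℝ)
    (hIDO : ∀ i, ChoreOrdered M (v i))
    (A : Fin n → Finset C) (assign : Fin n → Fin n)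
    (hrun : IsHFFDRun M v h A assign)
    (ℓ : Fin n) (hℓ : ℓ = assign ⟨n - 1, by omega⟩)
    (hmms : MMS M (v ℓ) n ≤ h ℓ) :
    FirstFitValid M A (v ℓ) (h ℓ) := by
  obtain ⟨hinj, hA⟩ := hrun
  have hsub (k : Fin n) : A k ⊆ M \ priorUnion A k := (hA k).1 ▸ hffdFill_sort_subset v h _ _
  have hℓ_remaining (k : Fin n) :
      ℓ ∈ univ \ (univ.filter fun j : Fin n => j < k).image assign :=
    mem_sdiff.2 ⟨mem_univ ℓ, hℓ ▸ apply_notMem_image_of_forall_le hinj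
      (fun k => Fin.le_def.2 (Nat.le_sub_one_of_lt k.isLt)) k⟩
  have hdisj (k : Fin n) : Disjoint (A k) (priorUnion A k) :=
    disjoint_of_subset_left (hsub k) sdiff_disjoint
  refine ⟨fun k => (hsub k).trans sdiff_subset,
    fun i j => disjoint_of_disjoint_priorUnion hdisj, hmms, ?_⟩
  rintro k B ⟨hB, hBcost, -⟩
  rw [(hA k).1]
  exact lexLe_hffdFill_sort v h _ (hℓ_remaining k) (hIDO ℓ) sdiff_subset hB hBcost

end
end

section
/- Let (M, A, v, τ) be a First Fit Valid tuple with n bundles and let c* ∈ M \ (A_1 ∪ ... ∪ A_n) be an unallocated chore. Let M' = {c ∈ M : v(c) ≥ v(c*)} and A'_k = A_k ∩ M' for each k (i.e., remove all chores of cost smaller than v(c*)). Then (M', (A'_1, ..., A'_n), v, τ) is First Fit Valid. -/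
open scoped Classical

noncomputable section

variable {C : Type*} [LinearOrder C]

/-!
Filtering out cheap chores can only lower the maximin share, since costs are nonnegative.
For the benchmark condition, a benchmark bundle `B` of the filtered tuple is a feasible bundle
of the original one, hence `B ≤lex A_k`. All chores of `B` cost at least `t = v(c*)`, while
`A_k ∩ M'` is the prefix of `A_k` of chores of cost `≥ t`: if `A_k ∩ M'` fell below `B`, then
`A_k` would already fall below `B` at the first position after that prefix.
-/

open Finset

/-- `costSeq v B i = nthCost v B (i + 1)`; unlike `nthCost`, it has no duplicated position `0`. -/
def costSeq (v : C → ℝ) (B : Finset C) (i : ℕ) : ℝ :=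
  ((B.sort (· ≤ ·)).map v).getD i 0

section costSeq

variable {v : C → ℝ} {B : Finset C} {i j : ℕ}

theorem costSeq_of_card_le (h : B.card ≤ i) : costSeq v B i = 0 :=
  List.getD_eq_default _ _ (by simpa using h)

theorem exists_mem_costSeq_eq (h : i < B.card) : ∃ c ∈ B, costSeq v B i = v c := by
  have hi : i < (B.sort (· ≤ ·)).length := by simpa using h
  exact ⟨_, (mem_sort _).1 (List.getElem_mem hi), by simp [costSeq, List.getElem?_eq_getElem hi]⟩

theorem costSeq_le_costSeq (hB : AntitoneOn v B) (hij : i ≤ j) (hj : j < B.card) :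
    costSeq v B j ≤ costSeq v B i := by
  have hj' : j < (B.sort (· ≤ ·)).length := by simpa using hj
  have hi' : i < (B.sort (· ≤ ·)).length := by omega
  simp only [costSeq, List.getD_eq_getElem?_getD, List.getElem?_map, List.getElem?_eq_getElem hj',
    List.getElem?_eq_getElem hi', Option.map_some, Option.getD_some]
  exact hB ((mem_sort _).1 (List.getElem_mem hi')) ((mem_sort _).1 (List.getElem_mem hj'))
    ((pairwise_sort B (· ≤ ·)).rel_get_of_le (a := ⟨i, hi'⟩) (b := ⟨j, hj'⟩) hij)

end costSeq

theorem Pi.toLex_lt_toLex_iff {ι β : Type*} [LT ι] [LT β] {f g : ι → β} :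
    toLex f < toLex g ↔ ∃ i, (∀ j < i, f j = g j) ∧ f i < g i :=
  Iff.rfl

theorem lexLe_iff_toLex_costSeq_le {v : C → ℝ} {B₁ B₂ : Finset C} :
    lexLe v B₁ B₂ ↔ toLex (costSeq v B₁) ≤ toLex (costSeq v B₂) := by
  rw [le_iff_lt_or_eq, toLex_inj, or_comm]
  refine or_congr ⟨fun h => funext fun i => h (i + 1), fun h p => congrFun h (p - 1)⟩ ⟨?_, ?_⟩
  · rintro ⟨q, hq, hpre⟩
    exact ⟨q - 1, fun j hj => hpre (j + 1) (by omega), hq⟩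
  · rintro ⟨_ | i, hpre, hi⟩
    · exact ⟨0, hi, by simp⟩
    · exact ⟨i + 2, hi, fun p hp => hpre (p - 1) (by omega)⟩

theorem Finset.sort_eq_sort_filter_append {X : Finset C} {p : C → Prop} [DecidablePred p]
    (hp : ∀ c ∈ X, ∀ c' ∈ X, c ≤ c' → p c' → p c) :
    X.sort (· ≤ ·) = (X.filter p).sort (· ≤ ·) ++ (X.filter (¬ p ·)).sort (· ≤ ·) := by
  refine List.Perm.eq_of_pairwise' (r := (· ≤ ·)) (pairwise_sort _ _) ?_ ?_
  · refine List.pairwise_append.2 ⟨pairwise_sort _ _, pairwise_sort _ _, fun a ha b hb => ?_⟩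
    rw [mem_sort, mem_filter] at ha hb
    by_contra! hba
    exact hb.2 (hp b hb.1 a ha.1 hba.le ha.2)
  · rw [← Multiset.coe_eq_coe, ← Multiset.coe_add, sort_eq, sort_eq, sort_eq, filter_val,
      filter_val, Multiset.filter_add_not]

section filterLe

variable {v : C → ℝ} {A : Finset C} {t : ℝ}

theorem sort_eq_sort_filter_le_append (hA : AntitoneOn v A) :
    A.sort (· ≤ ·) =
      (A.filter fun c => t ≤ v c).sort (· ≤ ·) ++ (A.filter fun c => ¬ t ≤ v c).sort (· ≤ ·) :=
  sort_eq_sort_filter_append fun _ hc _ hc' hcc' ht => ht.trans (hA hc hc' hcc')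

theorem costSeq_filter_of_lt (hA : AntitoneOn v A) {i : ℕ}
    (hi : i < (A.filter fun c => t ≤ v c).card) :
    costSeq v A i = costSeq v (A.filter fun c => t ≤ v c) i := by
  rw [costSeq, costSeq, sort_eq_sort_filter_le_append hA, List.map_append,
    List.getD_append _ _ _ _ (by simpa using hi)]

theorem costSeq_card_filter_lt (hA : AntitoneOn v A)
    (h : (A.filter fun c => t ≤ v c).card < A.card) :
    costSeq v A (A.filter fun c => t ≤ v c).card < t := by
  have hrest : 0 < (A.filter fun c => ¬ t ≤ v c).card := by
    have := card_filter_add_card_filter_not (s := A) (fun c => t ≤ v c)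
    omega
  obtain ⟨c, hc, hcost⟩ := exists_mem_costSeq_eq (v := v) hrest
  rw [costSeq, sort_eq_sort_filter_le_append (t := t) hA, List.map_append,
    List.getD_append_right _ _ _ _ (by simp), List.length_map, length_sort, Nat.sub_self,
    ← costSeq, hcost]
  exact not_le.1 (mem_filter.1 hc).2

end filterLe

theorem lexLe_filter_le_of_lexLe {v : C → ℝ} {A B : Finset C} {t : ℝ} (hA : AntitoneOn v A)
    (hB : AntitoneOn v B) (hBt : ∀ c ∈ B, t ≤ v c) (h : lexLe v B A) :
    lexLe v B (A.filter fun c => t ≤ v c) := by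
  set A' := A.filter fun c => t ≤ v c
  rw [lexLe_iff_toLex_costSeq_le] at h ⊢
  by_contra! hlt
  obtain ⟨i, hpre, hi⟩ := Pi.toLex_lt_toLex_iff.1 hlt
  refine h.not_gt (Pi.toLex_lt_toLex_iff.2 ?_)
  rcases lt_or_ge i A'.card with hiA' | hA'i
  · refine ⟨i, fun j hj => ?_, ?_⟩
    · rw [costSeq_filter_of_lt hA (hj.trans hiA')]
      exact hpre j hj
    · rw [costSeq_filter_of_lt hA hiA']
      exact hi
  have hBi : 0 < costSeq v B i := by rwa [costSeq_of_card_le hA'i] at hi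
  have hiB : i < B.card := by
    by_contra! hBi'
    rw [costSeq_of_card_le hBi'] at hBi
    exact hBi.false
  have hBm : t ≤ costSeq v B A'.card := by
    obtain ⟨c, hc, hcost⟩ := exists_mem_costSeq_eq (v := v) (hA'i.trans_lt hiB)
    exact hcost ▸ hBt c hc
  refine ⟨A'.card, fun j hj => (costSeq_filter_of_lt hA hj).trans (hpre j (hj.trans_le hA'i)), ?_⟩
  rcases lt_or_ge A'.card A.card with hA'A | hAA'
  · exact (costSeq_card_filter_lt hA hA'A).trans_le hBm
  · rw [costSeq_of_card_le hAA']
    exact hBi.trans_le (costSeq_le_costSeq hB hA'i hiB)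

section benchmark

variable {M : Finset C} {v : C → ℝ} {τ : ℝ} {n : ℕ} {A : Fin n → Finset C} {k : Fin n}
  {B : Finset C}

theorem exists_isBenchmark_lexLe (hB : B ⊆ M \ priorUnion A k) (hcost : bundleCost v B ≤ τ) :
    ∃ B₀, IsBenchmark M v τ A k B₀ ∧ lexLe v B B₀ := by
  set S := (M \ priorUnion A k).powerset.filter fun B' => bundleCost v B' ≤ τ
  have hBS : B ∈ S := mem_filter.2 ⟨mem_powerset.2 hB, hcost⟩
  obtain ⟨B₀, hB₀S, hmax⟩ := S.exists_max_image (fun B' => toLex (costSeq v B')) ⟨B, hBS⟩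
  obtain ⟨hB₀, hB₀cost⟩ := mem_filter.1 hB₀S
  refine ⟨B₀, ⟨mem_powerset.1 hB₀, hB₀cost, fun B' hB' hB'cost => ?_⟩,
    lexLe_iff_toLex_costSeq_le.2 (hmax B hBS)⟩
  exact lexLe_iff_toLex_costSeq_le.2 (hmax B' (mem_filter.2 ⟨mem_powerset.2 hB', hB'cost⟩))

theorem FirstFitValid.lexLe_of_subset (hA : FirstFitValid M A v τ)
    (hB : B ⊆ M \ priorUnion A k) (hcost : bundleCost v B ≤ τ) : lexLe v B (A k) := by
  obtain ⟨B₀, hB₀, hBB₀⟩ := exists_isBenchmark_lexLe hB hcost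
  rw [lexLe_iff_toLex_costSeq_le] at hBB₀ ⊢
  exact hBB₀.trans (lexLe_iff_toLex_costSeq_le.1 (hA.2.2.2 k B₀ hB₀))

end benchmark

theorem priorUnion_filter {n : ℕ} (A : Fin n → Finset C) (k : Fin n) (p : C → Prop)
    [DecidablePred p] :
    priorUnion (fun j => (A j).filter p) k = (priorUnion A k).filter p := by
  rw [priorUnion, priorUnion, filter_biUnion]

section MMS

variable {α : Type*} {M M' : Finset α} {v : α → ℝ} {n : ℕ}

theorem MMS_zero (M : Finset α) (v : α → ℝ) : MMS M v 0 = 0 := by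
  unfold MMS
  by_cases h : ∃ P : Fin 0 → Finset α, IsPartition M P
  · obtain ⟨P, hP⟩ := h
    convert Real.sInf_univ
    exact Set.eq_univ_of_forall fun _ => ⟨P, hP, fun i => i.elim0⟩
  · convert Real.sInf_empty
    exact Set.eq_empty_of_forall_notMem fun _ ⟨P, hP, _⟩ => h ⟨P, hP⟩

theorem IsPartition.inter [DecidableEq α] {P : Fin n → Finset α} (hP : IsPartition M P)
    (hM' : M' ⊆ M) :
    IsPartition M' fun i => P i ∩ M' :=
  ⟨fun _ => inter_subset_right, fun i j hij => (hP.2.1 i j hij).mono inter_subset_left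
    inter_subset_left, fun c hc => (hP.2.2 c (hM' hc)).imp fun _ hi => mem_inter.2 ⟨hi, hc⟩⟩

theorem isPartition_single (M : Finset α) (i₀ : Fin n) :
    IsPartition M fun i => if i = i₀ then M else ∅ := by
  refine ⟨fun i => ?_, fun i j hij => ?_, fun c hc => ⟨i₀, by simpa using hc⟩⟩
  · dsimp only
    split_ifs <;> simp
  · rcases eq_or_ne i i₀ with rfl | hi
    · simp [hij.symm]
    · simp [hi]

theorem MMS_mono (hM' : M' ⊆ M) (hv : ∀ c ∈ M, 0 ≤ v c) : MMS M' v n ≤ MMS M v n := by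
  rcases Nat.eq_zero_or_pos n with rfl | hn
  · rw [MMS_zero, MMS_zero]
  have hcost_nonneg : ∀ B ⊆ M, 0 ≤ bundleCost v B := fun B hB =>
    sum_nonneg fun c hc => hv c (hB hc)
  refine csInf_le_csInf ⟨0, ?_⟩ ⟨bundleCost v M, _, isPartition_single M ⟨0, hn⟩, fun i => ?_⟩ ?_
  · rintro x ⟨P, hP, hPx⟩
    exact (hcost_nonneg _ ((hP.1 ⟨0, hn⟩).trans hM')).trans (hPx ⟨0, hn⟩)
  · split_ifs
    · exact le_rfl
    · rw [bundleCost, sum_empty]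
      exact hcost_nonneg M subset_rfl
  · rintro x ⟨P, hP, hPx⟩
    refine ⟨_, hP.inter hM', fun i => (hPx i).trans' ?_⟩
    exact sum_le_sum_of_subset_of_nonneg inter_subset_left fun c hc _ => hv c (hP.1 i hc)

end MMS

theorem remove_small_chores_first_fit_valid_general {n : ℕ}
    (M : Finset C) (A : Fin n → Finset C) (v : C → ℝ) (τ : ℝ)
    (hv : ChoreOrdered M v) (hFFV : FirstFitValid M A v τ)
    (cstar : C) :
    FirstFitValid (M.filter fun c => v cstar ≤ v c)
      (fun k => (A k).filter fun c => v cstar ≤ v c) v τ := by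
  have hanti : AntitoneOn v M := hv.2
  refine ⟨fun k => filter_subset_filter _ (hFFV.1 k),
    fun i j hij => disjoint_filter_filter (hFFV.2.1 i j hij),
    (MMS_mono (filter_subset _ M) hv.1).trans hFFV.2.2.1, ?_⟩
  rintro k B ⟨hB, hBcost, -⟩
  rw [priorUnion_filter] at hB
  have hBM : B ⊆ M \ priorUnion A k := fun c hc => by
    have := hB hc
    simp only [mem_sdiff, mem_filter, not_and] at this ⊢
    exact ⟨this.1.1, fun h => this.2 h this.1.2⟩
  have hBt : ∀ c ∈ B, v cstar ≤ v c := fun c hc => (mem_filter.1 (mem_sdiff.1 (hB hc)).1).2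
  exact lexLe_filter_le_of_lexLe (hanti.mono (hFFV.1 k)) (hanti.mono (hBM.trans sdiff_subset))
    hBt (hFFV.lexLe_of_subset hBM hBcost)

/-- removing all chores of cost smaller than that of an unallocated chore from
a First Fit Valid tuple keeps it First Fit Valid. -/
theorem remove_small_chores_first_fit_valid {n : ℕ}
    (M : Finset C) (A : Fin n → Finset C) (v : C → ℝ) (τ : ℝ)
    (hv : ChoreOrdered M v) (hFFV : FirstFitValid M A v τ)
    (cstar : C) (hc1 : cstar ∈ M) (hc2 : cstar ∉ Finset.univ.biUnion A) :
    FirstFitValid (M.filter fun c => v cstar ≤ v c)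
      (fun k => (A k).filter fun c => v cstar ≤ v c) v τ :=
  remove_small_chores_first_fit_valid_general M A v τ hv hFFV cstar

end
end
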